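/- Let r ≥ 1 be an integer. Then γ̄_{h^{(r)}} = (1/Γ(r))·( γ_{h^{(1)}} − (ψ(r)+γ)·γ + ∑_{j=1}^{r−1} (H_j − ln(1+j))/j ), equivalently Γ(r)·γ̄_{h^{(r)}} = γ²/2 + ζ(2)/2 − 1/2 + ∫_0^∞ ln(1+t²)/((e^{2πt} − 1)·t) dt − (ψ(r)+γ)·γ + ∑_{j=1}^{r−1} (H_j − ln(1+j))/j. -/

import Mathlib

open MeasureTheory Filter Topology

/-- The digamma function `ψ(x) = Γ'(x)/Γ(x)`. -/
noncomputable def digamma (x : ℝ) : ℝ := deriv Real.Gamma x / Real.Gamma x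

/-- The rising factorial `x^{r̄} = Γ(x+r)/Γ(x)`. -/
noncomputable def rise (x r : ℝ) : ℝ := Real.Gamma (x + r) / Real.Gamma x

/-- The analytic extension of the hyperharmonic numbers:
`h_x^{(r)} = (x^{r̄}/(x Γ(r)))(ψ(x+r) − ψ(r))` for `r > 0`, and `h_x^{(0)} = 1/x`. -/
noncomputable def hyp (r x : ℝ) : ℝ :=
  if r = 0 then 1 / x
  else rise x r / (x * Real.Gamma r) * (digamma (x + r) - digamma r)

/-- `y_n(r) = ∑_{k=1}^n h_k^{(r)}/k^r − ∫_1^n h_x^{(r)}/x^r dx`. -/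
noncomputable def yseq (r : ℝ) (n : ℕ) : ℝ :=
  ∑ k ∈ Finset.Icc 1 n, hyp r k / (k : ℝ) ^ r - ∫ x in (1:ℝ)..(n:ℝ), hyp r x / x ^ r

/-- `z_n(r) = ∑_{k=1}^{n-1} h_k^{(r)}/k^r − ∫_1^n h_x^{(r)}/x^r dx`. -/
noncomputable def zseq (r : ℝ) (n : ℕ) : ℝ :=
  ∑ k ∈ Finset.Icc 1 (n - 1), hyp r k / (k : ℝ) ^ r - ∫ x in (1:ℝ)..(n:ℝ), hyp r x / x ^ r

/-- `b_n(r) = ∑_{k=1}^n h_k^{(r)}/k^{r̄} − ∫_1^n h_x^{(r)}/x^{r̄} dx`. -/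
noncomputable def bseq (r : ℝ) (n : ℕ) : ℝ :=
  ∑ k ∈ Finset.Icc 1 n, hyp r k / rise k r - ∫ x in (1:ℝ)..(n:ℝ), hyp r x / rise x r

/-- `a_n(r) = ∑_{k=1}^{n-1} h_k^{(r)}/k^{r̄} − ∫_1^n h_x^{(r)}/x^{r̄} dx`. -/
noncomputable def aseq (r : ℝ) (n : ℕ) : ℝ :=
  ∑ k ∈ Finset.Icc 1 (n - 1), hyp r k / rise k r - ∫ x in (1:ℝ)..(n:ℝ), hyp r x / rise x r
/-- The `m`-th harmonic number `H_m = ∑_{k=1}^m 1/k` (with `H 0 = 0`). -/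
noncomputable def H (m : ℕ) : ℝ := ∑ k ∈ Finset.Icc 1 m, (1 : ℝ) / k

/-- The generalized harmonic number `H_m^{(s)} = ∑_{k=1}^m 1/k^s`. -/
noncomputable def Hgen (m s : ℕ) : ℝ := ∑ k ∈ Finset.Icc 1 m, (1 : ℝ) / (k : ℝ) ^ s

/-- The unsigned Stirling numbers of the first kind, via the recurrence
`[n+1, k+1] = n·[n, k+1] + [n, k]`, `[0,0] = 1`. -/
def stirling1 : ℕ → ℕ → ℕ
  | 0, 0 => 1
  | 0, _ + 1 => 0
  | _ + 1, 0 => 0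
  | n + 1, k + 1 => n * stirling1 n (k + 1) + stirling1 n k

/-! From `ψ(x + 1) = ψ(x) + 1/x` one gets, for `x > 0`,
`Γ(r) h_x^{(r)} / x^{r̄} = (ψ(x + r) - ψ(r)) / x = h_x^{(1)} / x - ∑_{j=1}^{r-1} 1/(j (x + j))`.
Summing over `k ≤ n` and integrating over `[1, n]` gives
`Γ(r) b_n(r) = y_n(1) - ∑_{j=1}^{r-1} (H_{n+j} - H_j - log (n + j) + log (1 + j)) / j`,
and `H_{n+j} - log (n + j) → γ`. Finally `ψ(r) + γ = H_{r-1}`. -/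

open Real Finset

lemma forall_ne_neg_natCast_of_pos {x : ℝ} (hx : 0 < x) : ∀ m : ℕ, x ≠ -m :=
  fun m => ((neg_nonpos.2 m.cast_nonneg).trans_lt hx).ne'

lemma forall_add_natCast_ne_neg_natCast {x : ℝ} (hx : ∀ m : ℕ, x ≠ -m) (n : ℕ) :
    ∀ m : ℕ, x + n ≠ -m :=
  fun m h => hx (m + n) (by push_cast; linarith)

lemma digamma_add_one {x : ℝ} (hx : ∀ m : ℕ, x ≠ -m) :
    digamma (x + 1) = digamma x + x⁻¹ := by
  have hx0 : x ≠ 0 := by simpa using hx 0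
  have hderiv : deriv Gamma (x + 1) = Gamma x + x * deriv Gamma x := by
    rw [← deriv_comp_add_const,
      (show (fun y => Gamma (y + 1)) =ᶠ[𝓝 x] fun y => y * Gamma y from
        (eventually_ne_nhds hx0).mono fun y hy => Gamma_add_one hy).deriv_eq,
      deriv_fun_mul differentiableAt_fun_id (differentiableAt_Gamma hx), deriv_id'', one_mul]
  rw [digamma, digamma, hderiv, Gamma_add_one hx0]
  field_simp [Gamma_ne_zero hx]
  ring

lemma digamma_natCast_add_one (n : ℕ) :
    digamma (n + 1) = -eulerMascheroniConstant + harmonic n := by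
  rw [digamma, deriv_Gamma_nat, Gamma_nat_eq_factorial]
  field_simp

lemma digamma_one : digamma 1 = -eulerMascheroniConstant := by
  simpa using digamma_natCast_add_one 0

lemma digamma_add_sub_digamma {x : ℝ} (hx : ∀ m : ℕ, x ≠ -m) (n : ℕ) :
    digamma (x + (n + 1)) - digamma (n + 1) =
      digamma (x + 1) - digamma 1 - x * ∑ j ∈ Icc 1 n, ((j : ℝ) * (x + j))⁻¹ := by
  induction n with
  | zero => simp
  | succ n ih =>
    have hxn := forall_add_natCast_ne_neg_natCast hx (n + 1)
    have hxn0 : x + (n + 1) ≠ 0 := by simpa using hxn 0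
    push_cast at hxn ⊢
    rw [sum_Icc_succ_top (by omega), ← add_assoc, digamma_add_one hxn,
      digamma_add_one (forall_ne_neg_natCast_of_pos (by positivity))]
    have hpf : (x + (n + 1))⁻¹ - ((n : ℝ) + 1)⁻¹ = -x * (((n : ℝ) + 1) * (x + (n + 1)))⁻¹ := by
      field_simp
      ring
    push_cast
    linear_combination ih + hpf

lemma rise_one {x : ℝ} (hx : ∀ m : ℕ, x ≠ -m) : rise x 1 = x := by
  rw [rise, Gamma_add_one (by simpa using hx 0), mul_div_assoc, div_self (Gamma_ne_zero hx),
    mul_one]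

lemma hyp_one {x : ℝ} (hx : ∀ m : ℕ, x ≠ -m) :
    hyp 1 x = digamma (x + 1) + eulerMascheroniConstant := by
  rw [hyp, if_neg one_ne_zero, rise_one hx, Gamma_one, mul_one, div_self (by simpa using hx 0),
    one_mul, digamma_one, sub_neg_eq_add]

lemma hyp_div_rise {r x : ℝ} (hr : 0 < r) (hx : 0 < x) :
    hyp r x / rise x r = (digamma (x + r) - digamma r) / (x * Gamma r) := by
  have hrise : rise x r ≠ 0 :=
    (div_pos (Gamma_pos_of_pos (by linarith)) (Gamma_pos_of_pos hx)).ne'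
  rw [hyp, if_neg hr.ne']
  field_simp

lemma Gamma_mul_hyp_div_rise {x : ℝ} (hx : 0 < x) (n : ℕ) :
    Gamma (n + 1) * (hyp (n + 1) x / rise x (n + 1)) =
      hyp 1 x / x ^ (1 : ℝ) - ∑ j ∈ Icc 1 n, (j : ℝ)⁻¹ * (x + j)⁻¹ := by
  have hx' := forall_ne_neg_natCast_of_pos hx
  have hΓ : Gamma (n + 1) ≠ 0 := (Gamma_pos_of_pos (by positivity)).ne'
  rw [hyp_div_rise (by positivity) hx, digamma_add_sub_digamma hx' n, hyp_one hx', rpow_one,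
    digamma_one]
  simp_rw [mul_inv]
  field_simp
  ring

lemma Complex.forall_ne_neg_natCast_of_re_pos {s : ℂ} (hs : 0 < s.re) : ∀ m : ℕ, s ≠ -m :=
  fun m h => by
    rw [h, Complex.neg_re, Complex.natCast_re] at hs
    linarith [m.cast_nonneg (α := ℝ)]

lemma continuousOn_deriv_Gamma : ContinuousOn (deriv Gamma) (Set.Ioi 0) := by
  have hΓ : DifferentiableOn ℂ Complex.Gamma {s : ℂ | 0 < s.re} := fun s hs =>
    (Complex.differentiableAt_Gamma s
      (Complex.forall_ne_neg_natCast_of_re_pos hs)).differentiableWithinAt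
  have hre : Set.EqOn (fun t : ℝ => (deriv Complex.Gamma t).re) (deriv Gamma) (Set.Ioi 0) :=
    fun t (ht : 0 < t) => by
      have hd := (Complex.differentiableAt_Gamma (t : ℂ)
        (Complex.forall_ne_neg_natCast_of_re_pos (by simpa using ht))).hasDerivAt.real_of_complex
      simp only [Complex.Gamma_ofReal, Complex.ofReal_re] at hd
      exact hd.deriv.symm
  refine ContinuousOn.congr ?_ hre.symm
  exact Complex.continuous_re.comp_continuousOn
    ((hΓ.deriv (isOpen_lt continuous_const Complex.continuous_re)).continuousOn.comp
      Complex.continuous_ofReal.continuousOn fun t ht => by simpa using ht)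

lemma continuousOn_digamma : ContinuousOn digamma (Set.Ioi 0) :=
  continuousOn_deriv_Gamma.div differentiableOn_Gamma_Ioi.continuousOn
    fun _ hx => (Gamma_pos_of_pos hx).ne'

lemma continuousOn_hyp_one_div : ContinuousOn (fun x => hyp 1 x / x ^ (1 : ℝ)) (Set.Ioi 0) := by
  have hψ : ContinuousOn (fun x => digamma (x + 1)) (Set.Ioi 0) :=
    continuousOn_digamma.comp (continuousOn_id.add continuousOn_const)
      fun x (hx : 0 < x) => show 0 < x + 1 by linarith
  have hquot : ContinuousOn (fun x => (digamma (x + 1) + eulerMascheroniConstant) / x)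
      (Set.Ioi 0) :=
    (hψ.add continuousOn_const).div continuousOn_id fun x hx => hx.ne'
  refine hquot.congr fun x hx => ?_
  rw [hyp_one (forall_ne_neg_natCast_of_pos hx), rpow_one]

lemma H_eq_harmonic (m : ℕ) : H m = harmonic m := by
  simp [H, harmonic_eq_sum_Icc]

lemma sum_Icc_inv_add_natCast (n j : ℕ) :
    ∑ k ∈ Icc 1 n, ((k : ℝ) + j)⁻¹ = H (n + j) - H j := by
  induction n with
  | zero => simp
  | succ n ih =>
    rw [sum_Icc_succ_top (by omega), ih, H_eq_harmonic, H_eq_harmonic, H_eq_harmonic,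
      show n + 1 + j = n + j + 1 by omega, harmonic_succ]
    push_cast
    ring

lemma integral_inv_add {a b c : ℝ} (ha : 0 < a + c) (hb : 0 < b + c) :
    ∫ x in a..b, (x + c)⁻¹ = log (b + c) - log (a + c) := by
  rw [intervalIntegral.integral_comp_add_right (fun x => x⁻¹), integral_inv_of_pos ha hb,
    log_div hb.ne' ha.ne']

lemma tendsto_sum_inv_add_sub_integral (j : ℕ) :
    Tendsto (fun n : ℕ => ∑ k ∈ Icc 1 n, ((k : ℝ) + j)⁻¹ - ∫ x in (1 : ℝ)..n, (x + j)⁻¹) atTop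
      (𝓝 (eulerMascheroniConstant - H j + log (1 + j))) := by
  have hH : Tendsto (fun n : ℕ => H (n + j) - log ((n + j : ℕ) : ℝ)) atTop
      (𝓝 eulerMascheroniConstant) := by
    refine (tendsto_harmonic_sub_log.comp (tendsto_add_atTop_nat j)).congr fun n => ?_
    simp [H_eq_harmonic]
  refine ((hH.sub_const (H j)).add_const (log (1 + j))).congr' ?_
  filter_upwards [eventually_ge_atTop 1] with n hn
  have hn' : (1 : ℝ) ≤ n := by exact_mod_cast hn
  rw [sum_Icc_inv_add_natCast, integral_inv_add (by positivity) (by positivity)]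
  push_cast
  ring

lemma Gamma_mul_bseq (m : ℕ) {n : ℕ} (hn : 1 ≤ n) :
    Gamma (m + 1) * bseq (m + 1) n = yseq 1 n - ∑ j ∈ Icc 1 m,
      (j : ℝ)⁻¹ * (∑ k ∈ Icc 1 n, ((k : ℝ) + j)⁻¹ - ∫ x in (1 : ℝ)..n, (x + j)⁻¹) := by
  have hn' : (1 : ℝ) ≤ n := by exact_mod_cast hn
  have hpos : ∀ x ∈ Set.uIcc (1 : ℝ) n, 0 < x := fun x hx => by
    rw [Set.uIcc_of_le hn'] at hx
    exact one_pos.trans_le hx.1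
  have hinv_int : ∀ j : ℕ, IntervalIntegrable (fun x : ℝ => (x + j)⁻¹) volume 1 n := fun j =>
    intervalIntegral.intervalIntegrable_inv
      (fun x hx => (add_pos_of_pos_of_nonneg (hpos x hx) j.cast_nonneg).ne')
      (continuousOn_id.add continuousOn_const)
  have hsum : Gamma (m + 1) * ∑ k ∈ Icc 1 n, hyp (m + 1) k / rise k (m + 1) =
      ∑ k ∈ Icc 1 n, hyp 1 k / (k : ℝ) ^ (1 : ℝ) -
        ∑ j ∈ Icc 1 m, (j : ℝ)⁻¹ * ∑ k ∈ Icc 1 n, ((k : ℝ) + j)⁻¹ := by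
    rw [mul_sum, sum_congr rfl fun k hk => Gamma_mul_hyp_div_rise
      (by exact_mod_cast (mem_Icc.1 hk).1) m, sum_sub_distrib, sum_comm]
    simp only [mul_sum]
  have hint : Gamma (m + 1) * ∫ x in (1 : ℝ)..n, hyp (m + 1) x / rise x (m + 1) =
      (∫ x in (1 : ℝ)..n, hyp 1 x / x ^ (1 : ℝ)) -
        ∑ j ∈ Icc 1 m, (j : ℝ)⁻¹ * ∫ x in (1 : ℝ)..n, (x + j)⁻¹ := by
    rw [← intervalIntegral.integral_const_mul, intervalIntegral.integral_congr
      fun x hx => Gamma_mul_hyp_div_rise (hpos x hx) m, intervalIntegral.integral_sub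
      ((continuousOn_hyp_one_div.mono fun x hx => hpos x hx).intervalIntegrable)
      (by simpa only [sum_fn] using IntervalIntegrable.sum _ fun j _ => (hinv_int j).const_mul _),
      intervalIntegral.integral_finsetSum fun j _ => (hinv_int j).const_mul _]
    simp only [intervalIntegral.integral_const_mul]
  rw [bseq, yseq, mul_sub, hsum, hint]
  simp only [mul_sub, sum_sub_distrib]
  ring

theorem gamma_bar_eval (r : ℕ) (hr : 1 ≤ r) (γ₁ γbar : ℝ)
    (h₁ : Tendsto (yseq 1) atTop (𝓝 γ₁))
    (hb : Tendsto (bseq r) atTop (𝓝 γbar)) :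
    γbar = (1 / Real.Gamma r) *
      (γ₁ - (digamma r + Real.eulerMascheroniConstant) * Real.eulerMascheroniConstant
        + ∑ j ∈ Finset.Icc 1 (r - 1), (H j - Real.log (1 + (j : ℝ))) / (j : ℝ)) := by
  obtain ⟨m, rfl⟩ : ∃ m, r = m + 1 := ⟨r - 1, by omega⟩
  push_cast at hb ⊢
  have hlim : Tendsto (fun n => Gamma (m + 1) * bseq (m + 1) n) atTop (𝓝 (γ₁ -
      ∑ j ∈ Icc 1 m, (j : ℝ)⁻¹ * (eulerMascheroniConstant - H j + log (1 + j)))) :=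
    (h₁.sub (tendsto_finsetSum _ fun j _ =>
      (tendsto_sum_inv_add_sub_integral j).const_mul _)).congr'
      ((eventually_ge_atTop 1).mono fun n hn => (Gamma_mul_bseq m hn).symm)
  have hγbar := tendsto_nhds_unique (hb.const_mul _) hlim
  have hψ : digamma (m + 1) + eulerMascheroniConstant = H m := by
    rw [digamma_natCast_add_one, H_eq_harmonic]
    ring
  have hΓ : Gamma (m + 1) ≠ 0 := (Gamma_pos_of_pos (by positivity)).ne'
  have hsum : ∑ j ∈ Icc 1 m, (j : ℝ)⁻¹ * (eulerMascheroniConstant - H j + log (1 + j)) =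
      H m * eulerMascheroniConstant - ∑ j ∈ Icc 1 m, (H j - log (1 + j)) / j := by
    rw [H, sum_mul, ← sum_sub_distrib]
    exact sum_congr rfl fun j _ => by ring
  rw [hsum] at hγbar
  rw [hψ]
  field_simp
  linarith
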